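/- Let ρ₀, ρ₁ be density matrices on ℂ² and M₀, M₁ be positive semidefinite 2×2 matrices with M₀ + M₁ = I. If Tr(M₀ρ₀) = 1, Tr(M₁ρ₁) = 1, Tr(M₀ρ₁) = 0, and Tr(M₁ρ₀) = 0, then there exist orthogonal unit vectors ψ₀, ψ₁ ∈ ℂ² such that ρ₀ = M₀ = |ψ₀⟩⟨ψ₀| and ρ₁ = M₁ = |ψ₁⟩⟨ψ₁|. -/

import Mathlib

/-!
Since `tr (A * B) = ‖√A * √B‖²` (Frobenius) for positive semidefinite `A`, `B`, the vanishing
traces give `M₁ * ρ₀ = 0` and `M₀ * ρ₁ = 0`. Hence `M₀ * ρ₀ = ρ₀`, and taking adjoints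
`ρ₀ * ρ₁ = ρ₀ * M₀ * ρ₁ = 0`. Two nonzero `2 × 2` matrices with zero product both have rank one,
so `ρᵢ = ψᵢ ψᵢ*` with `ψᵢ` a unit vector, and `ρ₀ * ρ₁ = ⟪ψ₀, ψ₁⟫ ψ₀ ψ₁* = 0` makes them orthogonal.
An orthonormal basis resolves the identity, `ρ₀ + ρ₁ = 1`, so `M₀ = M₀ * (ρ₀ + ρ₁) = ρ₀` and
likewise `M₁ = ρ₁`.
-/

open Matrix ComplexOrder

namespace Matrix

variable {𝕜 n : Type*} [RCLike 𝕜] [Fintype n] [DecidableEq n]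

open scoped MatrixOrder in
theorem PosSemidef.mul_eq_zero_of_trace_mul_eq_zero {A B : Matrix n n 𝕜}
    (hA : A.PosSemidef) (hB : B.PosSemidef) (h : (A * B).trace = 0) : A * B = 0 := by
  set X := CFC.sqrt A
  set Y := CFC.sqrt B
  have hXX : X * X = A := CFC.sqrt_mul_sqrt_self A hA.nonneg
  have hYY : Y * Y = B := CFC.sqrt_mul_sqrt_self B hB.nonneg
  have hX : Xᴴ = X := (CFC.sqrt_nonneg A).posSemidef.isHermitian
  have hY : Yᴴ = Y := (CFC.sqrt_nonneg B).posSemidef.isHermitian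
  have hXY : X * Y = 0 := by
    rw [← trace_conjTranspose_mul_self_eq_zero_iff, conjTranspose_mul, hX, hY, ← h, ← hXX, ← hYY]
    simp only [mul_assoc]
    rw [trace_mul_comm Y]
    simp only [mul_assoc]
  rw [← hXX, ← hYY, mul_assoc, ← mul_assoc X Y Y, hXY, zero_mul, mul_zero]

theorem rank_pos_of_ne_zero {m K : Type*} [Field K] {A : Matrix m n K} (hA : A ≠ 0) :
    0 < A.rank := by
  rw [rank, pos_iff_ne_zero, Ne, Submodule.finrank_eq_zero, LinearMap.range_eq_bot,
    ← toLin'_apply', ← map_zero toLin', toLin'.injective.eq_iff]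
  exact hA

theorem PosSemidef.exists_eq_vecMulVec_of_rank_le_one {A : Matrix n n 𝕜} (hA : A.PosSemidef)
    (h : A.rank ≤ 1) : ∃ ψ : n → 𝕜, A = vecMulVec ψ (star ψ) := by
  by_cases hA0 : A = 0
  · exact ⟨0, by simp [hA0]⟩
  set d := hA.isHermitian.eigenvalues
  obtain ⟨i, hi⟩ : ∃ i, d i ≠ 0 :=
    Function.ne_iff.mp (hA.isHermitian.eigenvalues_eq_zero_iff.not.mpr hA0)
  have hd : ∀ j, j ≠ i → d j = 0 := fun j hj => by
    by_contra hdj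
    rw [hA.isHermitian.rank_eq_card_non_zero_eigs, Fintype.card_le_one_iff] at h
    exact hj (congrArg Subtype.val (h ⟨j, hdj⟩ ⟨i, hi⟩))
  set U : Matrix n n 𝕜 := (hA.isHermitian.eigenvectorUnitary : Matrix n n 𝕜)
  set v : n → 𝕜 := Pi.single i (√(d i) : 𝕜)
  have hsqrt : ((√(d i) : ℝ) : 𝕜) * (√(d i) : ℝ) = d i := by
    exact_mod_cast Real.mul_self_sqrt (hA.eigenvalues_nonneg i)
  have hdiag : diagonal (RCLike.ofReal ∘ d) = vecMulVec v (star v) := by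
    ext a b
    rcases eq_or_ne a b with rfl | hab
    · rcases eq_or_ne a i with rfl | ha
      · simp [v, vecMulVec_apply, hsqrt]
      · simp [v, vecMulVec_apply, ha, hd a ha]
    · rcases eq_or_ne a i with rfl | ha
      · simp [v, vecMulVec_apply, hab, hab.symm]
      · simp [v, vecMulVec_apply, hab, ha]
  refine ⟨U *ᵥ v, hA.isHermitian.spectral_theorem.trans ?_⟩
  rw [Unitary.conjStarAlgAut_apply, hdiag, mul_vecMulVec, vecMulVec_mul, star_mulVec,
    star_eq_conjTranspose]

theorem sum_vecMulVec_eq_one_of_orthonormal (ψ : n → n → 𝕜)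
    (hψ : ∀ i j, star (ψ i) ⬝ᵥ ψ j = (1 : Matrix n n 𝕜) i j) :
    ∑ i, vecMulVec (ψ i) (star (ψ i)) = 1 := by
  -- orthonormality of the rows of `W` says `W * Wᴴ = 1`; the claim is `Wᴴ * W = 1`
  set W : Matrix n n 𝕜 := of fun i => star (ψ i)
  have hW : W * Wᴴ = 1 := by
    ext i j
    simpa [W, mul_apply, dotProduct] using hψ i j
  ext i j
  simpa [W, mul_apply, sum_apply, vecMulVec_apply] using congrArg (· i j) (mul_eq_one_comm.mp hW)

theorem exists_orthonormal_eq_vecMulVec_of_mul_eq_zero {ρ₀ ρ₁ : Matrix (Fin 2) (Fin 2) 𝕜}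
    (hρ₀ : ρ₀.PosSemidef) (hρ₀tr : ρ₀.trace = 1) (hρ₁ : ρ₁.PosSemidef) (hρ₁tr : ρ₁.trace = 1)
    (hρ₀ρ₁ : ρ₀ * ρ₁ = 0) :
    ∃ ψ₀ ψ₁ : Fin 2 → 𝕜, star ψ₀ ⬝ᵥ ψ₀ = 1 ∧ star ψ₁ ⬝ᵥ ψ₁ = 1 ∧ star ψ₀ ⬝ᵥ ψ₁ = 0 ∧
      ρ₀ = vecMulVec ψ₀ (star ψ₀) ∧ ρ₁ = vecMulVec ψ₁ (star ψ₁) := by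
  have hrank := rank_add_rank_le_card_of_mul_eq_zero hρ₀ρ₁
  have hrank₀ := rank_pos_of_ne_zero (by rintro rfl; simp at hρ₀tr : ρ₀ ≠ 0)
  have hrank₁ := rank_pos_of_ne_zero (by rintro rfl; simp at hρ₁tr : ρ₁ ≠ 0)
  rw [Fintype.card_fin] at hrank
  obtain ⟨ψ₀, rfl⟩ := hρ₀.exists_eq_vecMulVec_of_rank_le_one (by omega)
  obtain ⟨ψ₁, rfl⟩ := hρ₁.exists_eq_vecMulVec_of_rank_le_one (by omega)
  have hψ₀ : star ψ₀ ⬝ᵥ ψ₀ = 1 := by rwa [trace_vecMulVec, dotProduct_comm] at hρ₀tr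
  have hψ₁ : star ψ₁ ⬝ᵥ ψ₁ = 1 := by rwa [trace_vecMulVec, dotProduct_comm] at hρ₁tr
  refine ⟨ψ₀, ψ₁, hψ₀, hψ₁, ?_, rfl, rfl⟩
  rw [vecMulVec_mul_vecMulVec, vecMulVec_eq_zero, smul_eq_zero, star_eq_zero] at hρ₀ρ₁
  rcases hρ₀ρ₁ with rfl | h | rfl
  · simp at hψ₀
  · exact h
  · simp at hψ₁

end Matrix

theorem stmt_17_general (ρ₀ ρ₁ M₀ M₁ : Matrix (Fin 2) (Fin 2) ℂ)
    (hρ₀ : ρ₀.PosSemidef) (hρ₀tr : ρ₀.trace = 1)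
    (hρ₁ : ρ₁.PosSemidef) (hρ₁tr : ρ₁.trace = 1)
    (hM₀ : M₀.PosSemidef) (hM₁ : M₁.PosSemidef) (hMsum : M₀ + M₁ = 1)
    (h01 : (M₀ * ρ₁).trace = 0) (h10 : (M₁ * ρ₀).trace = 0) :
    ∃ ψ₀ ψ₁ : Fin 2 → ℂ,
      star ψ₀ ⬝ᵥ ψ₀ = 1 ∧ star ψ₁ ⬝ᵥ ψ₁ = 1 ∧ star ψ₀ ⬝ᵥ ψ₁ = 0 ∧
      ρ₀ = Matrix.vecMulVec ψ₀ (star ψ₀) ∧ M₀ = Matrix.vecMulVec ψ₀ (star ψ₀) ∧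
      ρ₁ = Matrix.vecMulVec ψ₁ (star ψ₁) ∧ M₁ = Matrix.vecMulVec ψ₁ (star ψ₁) := by
  have hM₁ρ₀ : M₁ * ρ₀ = 0 := hM₁.mul_eq_zero_of_trace_mul_eq_zero hρ₀ h10
  have hM₀ρ₁ : M₀ * ρ₁ = 0 := hM₀.mul_eq_zero_of_trace_mul_eq_zero hρ₁ h01
  have hM₀ρ₀ : M₀ * ρ₀ = ρ₀ := by simpa [add_mul, hM₁ρ₀] using congrArg (· * ρ₀) hMsum
  have hM₁ρ₁ : M₁ * ρ₁ = ρ₁ := by simpa [add_mul, hM₀ρ₁] using congrArg (· * ρ₁) hMsum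
  have hρ₀ρ₁ : ρ₀ * ρ₁ = 0 := by
    have hρ₀M₀ : ρ₀ * M₀ = ρ₀ := by
      simpa [hρ₀.isHermitian.eq, hM₀.isHermitian.eq] using congrArg conjTranspose hM₀ρ₀
    rw [← hρ₀M₀, mul_assoc, hM₀ρ₁, mul_zero]
  obtain ⟨ψ₀, ψ₁, hψ₀, hψ₁, hψ₀₁, rfl, rfl⟩ :=
    exists_orthonormal_eq_vecMulVec_of_mul_eq_zero hρ₀ hρ₀tr hρ₁ hρ₁tr hρ₀ρ₁
  have hsum : vecMulVec ψ₀ (star ψ₀) + vecMulVec ψ₁ (star ψ₁) = 1 := by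
    simpa [Fin.sum_univ_two] using sum_vecMulVec_eq_one_of_orthonormal ![ψ₀, ψ₁] (by
      intro i j
      fin_cases i <;> fin_cases j <;> simp [hψ₀, hψ₁, hψ₀₁, star_dotProduct ψ₁ ψ₀])
  refine ⟨ψ₀, ψ₁, hψ₀, hψ₁, hψ₀₁, rfl, ?_, rfl, ?_⟩
  · rw [← hM₀ρ₀, ← add_zero (M₀ * _), ← hM₀ρ₁, ← mul_add, hsum, mul_one]
  · rw [← hM₁ρ₁, ← zero_add (M₁ * _), ← hM₁ρ₀, ← mul_add, hsum, mul_one]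

theorem stmt_17 (ρ₀ ρ₁ M₀ M₁ : Matrix (Fin 2) (Fin 2) ℂ)
    (hρ₀ : ρ₀.PosSemidef) (hρ₀tr : ρ₀.trace = 1)
    (hρ₁ : ρ₁.PosSemidef) (hρ₁tr : ρ₁.trace = 1)
    (hM₀ : M₀.PosSemidef) (hM₁ : M₁.PosSemidef) (hMsum : M₀ + M₁ = 1)
    (h00 : (M₀ * ρ₀).trace = 1) (h11 : (M₁ * ρ₁).trace = 1)
    (h01 : (M₀ * ρ₁).trace = 0) (h10 : (M₁ * ρ₀).trace = 0) :
    ∃ ψ₀ ψ₁ : Fin 2 → ℂ,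
      star ψ₀ ⬝ᵥ ψ₀ = 1 ∧ star ψ₁ ⬝ᵥ ψ₁ = 1 ∧ star ψ₀ ⬝ᵥ ψ₁ = 0 ∧
      ρ₀ = Matrix.vecMulVec ψ₀ (star ψ₀) ∧ M₀ = Matrix.vecMulVec ψ₀ (star ψ₀) ∧
      ρ₁ = Matrix.vecMulVec ψ₁ (star ψ₁) ∧ M₁ = Matrix.vecMulVec ψ₁ (star ψ₁) :=
  stmt_17_general ρ₀ ρ₁ M₀ M₁ hρ₀ hρ₀tr hρ₁ hρ₁tr hM₀ hM₁ hMsum h01 h10
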